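/- arXiv:1307.1783 — 5 statements merged into one kernel-verified Lean document; each statement's English description precedes it below -/
import Mathlib

section
/- For any tuples r, s : Fin t → R, the matrix product μ(r) · μ(s) in M_t(R[z]/(z^t)) equals μ(u), where u is the twisted convolution of r and s, u_m = Σ_{i=0}^{m} r_i · σ^i(s_{m−i}) for 0 ≤ m ≤ t−1. (This is the multiplicative property of the Fundamental Embedding of the truncated skew polynomial ring R[w,σ]/(w^t) into M_t(R[z]/(z^t)).) -/
open Polynomial

/-- The truncated polynomial ring `R[z]/(z^t)`: the quotient of `R[z]` by the
two-sided ideal generated by `z^t`. -/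
abbrev TruncPoly (R : Type*) [Ring R] (t : ℕ) : Type _ :=
  RingQuot (fun p q : R[X] => p = X ^ t ∧ q = 0)

/-- The quotient map `π : R[z] → R[z]/(z^t)`. -/
noncomputable abbrev truncMk (R : Type*) [Ring R] (t : ℕ) : R[X] →+* TruncPoly R t :=
  RingQuot.mkRingHom _

/-- The fundamental embedding map `μ : (Fin t → R) → M_t(R[z]/(z^t))`,
`μ(r)_{i,j} = π(σ^i(r_{j⊖i}) z^{j⊖i})`, where `j ⊖ i` is subtraction modulo `t`
(realized as subtraction in `Fin t`). -/
noncomputable def mu {R : Type*} [Ring R] {t : ℕ} (σ : R →+* R) (r : Fin t → R) :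
    Matrix (Fin t) (Fin t) (TruncPoly R t) :=
  Matrix.of fun i j =>
    truncMk R t (C ((⇑σ)^[(i : ℕ)] (r (j - i))) * X ^ ((j - i : Fin t) : ℕ))

/-- Multiplicativity of the fundamental embedding: `μ(r) ⬝ μ(s) = μ(u)` where
`u` is the twisted convolution `u_m = ∑_{i ≤ m} r_i σ^i(s_{m-i})`. -/
theorem mu_mul (R : Type*) [Ring R] (t : ℕ) (ht : 1 ≤ t)
    (σ : R →+* R) (hσ : ∀ r : R, (⇑σ)^[t] r = r) (r s : Fin t → R) :
    mu σ r * mu σ s =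
      mu σ (fun m => ∑ i ∈ Finset.Iic m, r i * (⇑σ)^[(i : ℕ)] (s (m - i))) := by
  haveI : NeZero t := ⟨by omega⟩
  have hXt : truncMk R t (X ^ t : R[X]) = 0 := by
    have h := RingQuot.mkRingHom_rel
      (r := fun p q : R[X] => p = X ^ t ∧ q = 0) (x := X ^ t) (y := 0) ⟨rfl, rfl⟩
    simpa using h
  have hzero : ∀ (w : R) (n : ℕ), t ≤ n → truncMk R t (C w * X ^ n) = 0 := by
    intro w n hn
    have hx : (X : R[X]) ^ n = X ^ (n - t) * X ^ t := by
      rw [← pow_add]; congr 1; omega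
    rw [hx, ← mul_assoc, map_mul, hXt, mul_zero]
  have hmulk : ∀ (k : ℕ) (x : R), (⇑σ)^[t * k] x = x := by
    intro k
    induction k with
    | zero => intro x; simp
    | succ k ih =>
      intro x
      rw [Nat.mul_succ, Function.iterate_add_apply, hσ, ih]
  have hiter : ∀ (n : ℕ) (x : R), (⇑σ)^[n] x = (⇑σ)^[n % t] x := by
    intro n x
    conv_lhs => rw [← Nat.mod_add_div n t]
    rw [Function.iterate_add_apply, hmulk]
  have hCX : ∀ (x y : R) (p q : ℕ),
      (C x * X ^ p) * (C y * X ^ q) = C (x * y) * X ^ (p + q) := by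
    intro x y p q
    rw [C_mul_X_pow_eq_monomial, C_mul_X_pow_eq_monomial, C_mul_X_pow_eq_monomial,
      monomial_mul_monomial]
  have hsub_le : ∀ a m : Fin t, a ≤ m → ((m - a : Fin t) : ℕ) = (m : ℕ) - (a : ℕ) := by
    intro a m h
    have h' : (a : ℕ) ≤ (m : ℕ) := h
    have ha := a.isLt
    have hm := m.isLt
    rw [Fin.sub_def]
    show (t - (a : ℕ) + (m : ℕ)) % t = (m : ℕ) - (a : ℕ)
    have e : t - (a : ℕ) + (m : ℕ) = ((m : ℕ) - (a : ℕ)) + t := by omega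
    rw [e, Nat.add_mod_right, Nat.mod_eq_of_lt (by omega)]
  have hsub_gt : ∀ a m : Fin t, ¬ a ≤ m →
      ((m - a : Fin t) : ℕ) = (m : ℕ) + t - (a : ℕ) := by
    intro a m h
    have h' : (m : ℕ) < (a : ℕ) := by
      rw [Fin.le_def] at h; omega
    have ha := a.isLt
    rw [Fin.sub_def]
    show (t - (a : ℕ) + (m : ℕ)) % t = (m : ℕ) + t - (a : ℕ)
    rw [Nat.mod_eq_of_lt (by omega)]
    omega
  ext i j
  rw [Matrix.mul_apply]
  simp only [mu, Matrix.of_apply]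
  set m : Fin t := j - i with hm
  rw [← Equiv.sum_comp (Equiv.addLeft i)
    (fun k : Fin t => truncMk R t (C ((⇑σ)^[(i:ℕ)] (r (k - i))) * X ^ ((k - i : Fin t) : ℕ)) *
      truncMk R t (C ((⇑σ)^[(k:ℕ)] (s (j - k))) * X ^ ((j - k : Fin t) : ℕ)))]
  simp only [Equiv.coe_addLeft]
  have key : ∀ a : Fin t,
      truncMk R t (C ((⇑σ)^[(i:ℕ)] (r (i + a - i))) * X ^ ((i + a - i : Fin t) : ℕ)) *
      truncMk R t (C ((⇑σ)^[((i + a : Fin t):ℕ)] (s (j - (i + a)))) * X ^ ((j - (i + a) : Fin t) : ℕ))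
      = truncMk R t (C ((⇑σ)^[(i:ℕ)] (r a) * (⇑σ)^[(i:ℕ)] ((⇑σ)^[(a:ℕ)] (s (m - a))))
          * X ^ ((a : ℕ) + ((m - a : Fin t) : ℕ))) := by
    intro a
    have e1 : i + a - i = a := add_sub_cancel_left i a
    have e2 : j - (i + a) = m - a := sub_add_eq_sub_sub j i a
    have e3 : ∀ x : R, (⇑σ)^[((i + a : Fin t):ℕ)] x = (⇑σ)^[(i:ℕ)] ((⇑σ)^[(a:ℕ)] x) := by
      intro x
      rw [Fin.val_add, ← hiter, Function.iterate_add_apply]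
    rw [e1, e2, e3, ← map_mul, hCX]
  simp only [key]
  have hvanish : ∀ a ∈ Finset.univ, a ∉ Finset.Iic m →
      truncMk R t (C ((⇑σ)^[(i:ℕ)] (r a) * (⇑σ)^[(i:ℕ)] ((⇑σ)^[(a:ℕ)] (s (m - a))))
          * X ^ ((a : ℕ) + ((m - a : Fin t) : ℕ))) = 0 := by
    intro a _ hna
    rw [Finset.mem_Iic] at hna
    apply hzero
    rw [hsub_gt a m hna]
    have : (m : ℕ) < (a : ℕ) := by
      rw [Fin.le_def] at hna; omega
    omega
  rw [← Finset.sum_subset (Finset.subset_univ (Finset.Iic m)) hvanish]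
  have hσi : ∀ x y : R, (⇑σ)^[(i:ℕ)] (x * y) = (⇑σ)^[(i:ℕ)] x * (⇑σ)^[(i:ℕ)] y := by
    intro x y
    rw [← RingHom.coe_pow, map_mul]
  have hσsum : (⇑σ)^[(i:ℕ)] (∑ a ∈ Finset.Iic m, r a * (⇑σ)^[(a:ℕ)] (s (m - a)))
      = ∑ a ∈ Finset.Iic m, (⇑σ)^[(i:ℕ)] (r a * (⇑σ)^[(a:ℕ)] (s (m - a))) := by
    rw [← RingHom.coe_pow, map_sum]
  rw [hσsum]
  rw [map_sum C _ (Finset.Iic m), Finset.sum_mul, map_sum]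
  apply Finset.sum_congr rfl
  intro a ha
  rw [Finset.mem_Iic] at ha
  have hle : (a : ℕ) ≤ (m : ℕ) := ha
  have : (a : ℕ) + ((m - a : Fin t) : ℕ) = (m : ℕ) := by
    rw [hsub_le a m ha]; omega
  rw [this, hσi]
end

section
/- Suppose R is commutative. Then the standard identity of degree 2t holds on the image of μ: for any tuples r⁽¹⁾, …, r⁽²ᵗ⁾ : Fin t → R, one has Σ_{π ∈ Sym(2t)} sgn(π) · μ(r^{(π(1))}) · μ(r^{(π(2))}) ⋯ μ(r^{(π(2t))}) = 0 in M_t(R[z]/(z^t)). (This expresses that S_{2t} = 0 is an identity on the truncated skew polynomial ring R[w,σ]/(w^t).) -/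
open Polynomial

/-! ### Auxiliary lemmas -/

private lemma prod_decomp_at {A : Type*} [Monoid A] (L : List A) (p : ℕ) (h : p + 1 < L.length) :
    L.prod = (L.take p).prod *
      ((L[p]'(by omega)) * ((L[p+1]'h) * (L.drop (p+2)).prod)) := by
  conv_lhs => rw [← List.take_append_drop p L]
  rw [List.prod_append]
  congr 1
  rw [List.drop_eq_getElem_cons (by omega), List.drop_eq_getElem_cons (l := L) (i := p+1) h,
    List.prod_cons, List.prod_cons]

private lemma ofFn_prod_swap_adjacent {A : Type*} [Monoid A] {n : ℕ} (y : Fin n → A)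
    (a b : Fin n) (hab : (a : ℕ) + 1 = (b : ℕ)) (hc : y a * y b = y b * y a) :
    (List.ofFn (fun i => y (Equiv.swap a b i))).prod = (List.ofFn y).prod := by
  have hbn := b.isLt
  have hpn : (a : ℕ) + 1 < n := by omega
  have hlen1 : (List.ofFn (fun i => y (Equiv.swap a b i))).length = n := List.length_ofFn
  have hlen2 : (List.ofFn y).length = n := List.length_ofFn
  have hbmk : ∀ h : (a:ℕ) + 1 < n, (⟨(a:ℕ)+1, h⟩ : Fin n) = b := fun h => Fin.ext hab
  have htake : (List.ofFn (fun i => y (Equiv.swap a b i))).take (a:ℕ)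
      = (List.ofFn y).take (a:ℕ) := by
    apply List.ext_getElem (by simp)
    intro i h1 h2
    simp only [List.getElem_take, List.getElem_ofFn]
    have hilt : i < (a:ℕ) := by
      simpa [hlen1] using h1
    congr 1
    apply Equiv.swap_apply_of_ne_of_ne
    · intro hcon
      have := congrArg Fin.val hcon
      simp at this
      omega
    · intro hcon
      have := congrArg Fin.val hcon
      simp at this
      omega
  have hdrop : (List.ofFn (fun i => y (Equiv.swap a b i))).drop ((a:ℕ)+2)
      = (List.ofFn y).drop ((a:ℕ)+2) := by
    apply List.ext_getElem (by simp)
    intro i h1 h2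
    simp only [List.getElem_drop, List.getElem_ofFn]
    congr 1
    apply Equiv.swap_apply_of_ne_of_ne
    · intro hcon
      have := congrArg Fin.val hcon
      simp at this
      omega
    · intro hcon
      have := congrArg Fin.val hcon
      simp at this
      omega
  rw [prod_decomp_at (List.ofFn fun i => y (Equiv.swap a b i)) (a:ℕ) (by omega),
      prod_decomp_at (List.ofFn y) (a:ℕ) (by omega)]
  simp only [List.getElem_ofFn, Fin.eta, hbmk, Equiv.swap_apply_left, Equiv.swap_apply_right,
    htake, hdrop]
  congr 1
  rw [← mul_assoc, ← hc, mul_assoc]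

/-- The standard alternating sum vanishes whenever at least `t + 1` of the `n ≤ 2t`
arguments pairwise commute. -/
private lemma standard_sum_commuting {A : Type*} [Ring A] {n t : ℕ} (hn : n ≤ 2 * t)
    (x : Fin n → A) (sc : Finset (Fin n)) (hcard : t + 1 ≤ sc.card)
    (hcomm : ∀ i ∈ sc, ∀ j ∈ sc, x i * x j = x j * x i) :
    ∑ π : Equiv.Perm (Fin n),
      (Equiv.Perm.sign π : ℤ) • (List.ofFn fun i => x (π i)).prod = 0 := by
  classical
  have hn0 : 0 < n := by
    have h1 := Finset.card_le_univ sc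
    rw [Fintype.card_fin] at h1
    omega
  set idx : ℕ → Fin n := fun p => ⟨p % n, Nat.mod_lt p hn0⟩ with hidx
  have hidxval : ∀ p : ℕ, p < n → ((idx p : ℕ)) = p := fun p hp => Nat.mod_eq_of_lt hp
  -- existence of an adjacent pair of positions mapped into sc
  have hex : ∀ π : Equiv.Perm (Fin n),
      ∃ p, p + 1 < n ∧ π (idx p) ∈ sc ∧ π (idx (p+1)) ∈ sc := by
    intro π
    by_contra hno
    push_neg at hno
    set S : Finset (Fin n) := sc.image π.symm with hS
    have hmem : ∀ q : Fin n, q ∈ S → π q ∈ sc := by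
      intro q hq
      rw [hS, Finset.mem_image] at hq
      obtain ⟨a, ha, rfl⟩ := hq
      simpa using ha
    have hScard : S.card = sc.card := Finset.card_image_of_injective _ π.symm.injective
    have key : ∀ p q : Fin n, p ∈ S → q ∈ S → (p:ℕ)/2 = (q:ℕ)/2 → (p:ℕ) < (q:ℕ) → False := by
      intro p q hp hq hdiv hlt
      have hq1 : (q : ℕ) = (p : ℕ) + 1 := by omega
      have hqlt := q.isLt
      refine hno (p : ℕ) (by omega) ?_ ?_
      · have : idx (p : ℕ) = p := by
          apply Fin.ext; exact hidxval _ p.isLt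
        rw [this]; exact hmem p hp
      · have : idx ((p:ℕ)+1) = q := by
          apply Fin.ext; rw [hidxval _ (by omega)]; omega
        rw [this]; exact hmem q hq
    have hinj : Set.InjOn (fun q : Fin n => (⟨(q : ℕ)/2, by have := q.isLt; omega⟩ : Fin t)) S := by
      intro p hp q hq hpq
      simp only [Fin.mk.injEq] at hpq
      by_contra hne
      rcases Nat.lt_or_ge (p : ℕ) (q : ℕ) with h | h
      · exact key p q hp hq hpq h
      · have hlt : (q:ℕ) < (p:ℕ) := by
          rcases Nat.lt_or_ge (q:ℕ) (p:ℕ) with h' | h'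
          · exact h'
          · exact absurd (Fin.ext (le_antisymm h' h)) hne
        exact key q p hq hp hpq.symm hlt
    have hb : S.card ≤ t := by
      have := Finset.card_le_card_of_injOn _ (fun q _ => Finset.mem_univ _) hinj
      simpa using this
    omega
  set P : Equiv.Perm (Fin n) → ℕ := fun π => Nat.find (hex π) with hP
  have hQP : ∀ π : Equiv.Perm (Fin n),
      (P π) + 1 < n ∧ π (idx (P π)) ∈ sc ∧ π (idx (P π + 1)) ∈ sc :=
    fun π => Nat.find_spec (hex π)
  have hmin : ∀ (π : Equiv.Perm (Fin n)) (q : ℕ), q < P π →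
      ¬(q + 1 < n ∧ π (idx q) ∈ sc ∧ π (idx (q+1)) ∈ sc) :=
    fun π q hq => Nat.find_min (hex π) hq
  set g : Equiv.Perm (Fin n) → Equiv.Perm (Fin n) :=
    fun π => π * Equiv.swap (idx (P π)) (idx (P π + 1)) with hg
  have hgapp : ∀ π i, g π i = π (Equiv.swap (idx (P π)) (idx (P π + 1)) i) := by
    intro π i; rw [hg]; rfl
  have hPg : ∀ π, P (g π) = P π := by
    intro π
    obtain ⟨hpn, hpa, hpb⟩ := hQP π
    have hfix : ∀ q : ℕ, q < P π → Equiv.swap (idx (P π)) (idx (P π + 1)) (idx q) = idx q := by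
      intro q hq
      apply Equiv.swap_apply_of_ne_of_ne
      · intro hcon
        have := congrArg Fin.val hcon
        rw [hidxval _ (by omega), hidxval _ (by omega)] at this
        omega
      · intro hcon
        have := congrArg Fin.val hcon
        rw [hidxval _ (by omega), hidxval _ (by omega)] at this
        omega
    have h1 : P (g π) ≤ P π := by
      apply Nat.find_le
      refine ⟨hpn, ?_, ?_⟩
      · rw [hgapp, Equiv.swap_apply_left]; exact hpb
      · rw [hgapp, Equiv.swap_apply_right]; exact hpa
    have h2 : ¬ (P (g π) < P π) := by
      intro hlt
      obtain ⟨hq1, hqa, hqb⟩ := hQP (g π)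
      set q := P (g π) with hq
      rw [hgapp, hfix q hlt] at hqa
      refine hmin π q hlt ⟨hq1, hqa, ?_⟩
      rcases Nat.lt_or_ge (q+1) (P π) with h | h
      · rw [hgapp, hfix (q+1) h] at hqb
        exact hqb
      · have hq1p : q + 1 = P π := by omega
        rw [hq1p]; exact hpa
    omega
  have hgg : ∀ π, g (g π) = π := by
    intro π
    have h3 : g (g π) = g π * Equiv.swap (idx (P (g π))) (idx (P (g π) + 1)) := by rw [hg]
    rw [h3, hPg π, hg]
    rw [mul_assoc, Equiv.swap_mul_self, mul_one]
  have hgne : ∀ π, g π ≠ π := by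
    intro π h
    obtain ⟨hpn, hpa, hpb⟩ := hQP π
    have h4 := congrArg (fun σ : Equiv.Perm (Fin n) => σ (idx (P π))) h
    rw [hgapp, Equiv.swap_apply_left] at h4
    have h5 := π.injective h4
    have h6 := congrArg Fin.val h5
    rw [hidxval _ hpn, hidxval _ (by omega)] at h6
    omega
  have hsign : ∀ π, (Equiv.Perm.sign (g π) : ℤ) = -(Equiv.Perm.sign π : ℤ) := by
    intro π
    obtain ⟨hpn, hpa, hpb⟩ := hQP π
    have hne : idx (P π) ≠ idx (P π + 1) := by
      intro hcon
      have := congrArg Fin.val hcon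
      rw [hidxval _ (by omega), hidxval _ hpn] at this
      omega
    rw [hg]
    simp [Equiv.Perm.sign_swap hne]
  have hprod : ∀ π, (List.ofFn fun i => x (g π i)).prod = (List.ofFn fun i => x (π i)).prod := by
    intro π
    obtain ⟨hpn, hpa, hpb⟩ := hQP π
    have h1 : (List.ofFn fun i => x (g π i)) =
        (List.ofFn fun i => (fun j => x (π j)) (Equiv.swap (idx (P π)) (idx (P π + 1)) i)) := by
      congr 1
    rw [h1]
    apply ofFn_prod_swap_adjacent (y := fun j => x (π j))
    · rw [hidxval _ (by omega), hidxval _ hpn]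
    · exact hcomm _ hpa _ hpb
  apply Finset.sum_ninvolution g
  · intro π
    rw [hsign, hprod, neg_smul]
    exact add_neg_cancel _
  · intro π _
    exact hgne π
  · intro π; exact Finset.mem_univ _
  · exact hgg

/-- Entries of a product of matrices lie in the product of the corresponding
powers of an ideal containing the entries of the factors. -/
private lemma entries_list_prod_mem {T : Type*} [CommRing T] {m : ℕ} (I : Ideal T)
    (c : Matrix (Fin m) (Fin m) T → ℕ) (l : List (Matrix (Fin m) (Fin m) T))
    (h : ∀ M ∈ l, ∀ i j, M i j ∈ I ^ (c M)) :
    ∀ i j, l.prod i j ∈ I ^ ((l.map c).sum) := by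
  induction l with
  | nil =>
    intro i j
    simp only [List.prod_nil, List.map_nil, List.sum_nil, pow_zero, Ideal.one_eq_top]
    exact Submodule.mem_top
  | cons M l ih =>
    intro i j
    rw [List.prod_cons, List.map_cons, List.sum_cons, pow_add, Matrix.mul_apply]
    apply Submodule.sum_mem
    intro k _
    exact Ideal.mul_mem_mul (h M List.mem_cons_self i k)
      (ih (fun M' hM' => h M' (List.mem_cons_of_mem _ hM')) k j)

/-- A product of matrices, at least `t` of which have all entries in `I` with `I ^ t = 0`,
vanishes. -/
private lemma prod_eq_zero_of_many_entries_mem {T : Type*} [CommRing T] {m k t : ℕ}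
    (I : Ideal T) (hIt : I ^ t = ⊥) (y : Fin k → Matrix (Fin m) (Fin m) T)
    (sbad : Finset (Fin k)) (hcount : t ≤ sbad.card)
    (hmem : ∀ i ∈ sbad, ∀ p q, y i p q ∈ I) :
    (List.ofFn y).prod = 0 := by
  classical
  have hc : ∀ M ∈ List.ofFn y, ∀ p q,
      M p q ∈ I ^ ((fun M => if ∀ p q, M p q ∈ I then 1 else 0) M) := by
    intro M _ p q
    show M p q ∈ I ^ (if ∀ p q, M p q ∈ I then 1 else 0)
    by_cases h' : ∀ p q, M p q ∈ I
    · rw [if_pos h', pow_one]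
      exact h' p q
    · rw [if_neg h', pow_zero, Ideal.one_eq_top]
      exact Submodule.mem_top
  have h := entries_list_prod_mem I _ (List.ofFn y) hc
  have hsum : t ≤ (((List.ofFn y)).map
      (fun M => if ∀ p q, M p q ∈ I then 1 else 0)).sum := by
    rw [List.map_ofFn, List.sum_ofFn]
    have hstep : ∀ i ∈ sbad,
        1 ≤ ((fun M => if ∀ p q, M p q ∈ I then 1 else 0) ∘ y) i := by
      intro i hi
      simp only [Function.comp_apply]
      rw [if_pos (hmem i hi)]
    calc t ≤ sbad.card := hcount
      _ = ∑ i ∈ sbad, 1 := by simp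
      _ ≤ ∑ i ∈ sbad, ((fun M => if ∀ p q, M p q ∈ I then 1 else 0) ∘ y) i :=
          Finset.sum_le_sum hstep
      _ ≤ ∑ i, ((fun M => if ∀ p q, M p q ∈ I then 1 else 0) ∘ y) i :=
          Finset.sum_le_sum_of_subset (Finset.subset_univ _)
  apply Matrix.ext
  intro p q
  have hle : I ^ ((((List.ofFn y)).map
      (fun M => if ∀ p q, M p q ∈ I then 1 else 0)).sum) ≤ I ^ t :=
    Ideal.pow_le_pow_right hsum
  have hmem2 := hle (h p q)
  rw [hIt] at hmem2
  simpa using hmem2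

/-- If `R` is commutative then the standard identity `S_{2t} = 0` holds on the image
of `μ`, i.e. on the truncated skew polynomial ring `R[w,σ]/(w^t)`. -/
theorem standard_identity_mu (R : Type*) [CommRing R] (t : ℕ) (ht : 1 ≤ t)
    (σ : R →+* R) (hσ : ∀ r : R, (⇑σ)^[t] r = r)
    (r : Fin (2 * t) → Fin t → R) :
    ∑ π : Equiv.Perm (Fin (2 * t)),
      (Equiv.Perm.sign π : ℤ) • (List.ofFn fun i => mu σ (r (π i))).prod = 0 := by
  classical
  haveI : NeZero t := ⟨by omega⟩
  set T := TruncPoly R t with hT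
  set I : Ideal T := Ideal.span {truncMk R t X} with hI
  have hIt : I ^ t = ⊥ := by
    rw [hI, Ideal.span_singleton_pow]
    have hz : (truncMk R t X) ^ t = 0 := by
      rw [← map_pow, RingQuot.mkRingHom_rel ⟨rfl, rfl⟩, map_zero]
    rw [hz]
    simp
  set D : Fin (2*t) → Matrix (Fin t) (Fin t) T :=
    fun i => Matrix.diagonal (fun p => mu σ (r i) p p) with hD
  set N : Fin (2*t) → Matrix (Fin t) (Fin t) T := fun i => mu σ (r i) - D i with hN
  have hNmem : ∀ i p q, N i p q ∈ I := by
    intro i p q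
    by_cases hpq : p = q
    · subst hpq
      simp [hN, hD, Matrix.sub_apply, Matrix.diagonal_apply_eq]
    · rw [hN]
      simp only [hD, Matrix.sub_apply]
      rw [Matrix.diagonal_apply_ne _ hpq, sub_zero]
      show truncMk R t (C ((⇑σ)^[(p : ℕ)] (r i (q - p))) * X ^ ((q - p : Fin t) : ℕ)) ∈ I
      have hk : ((q - p : Fin t) : ℕ) ≠ 0 := by
        intro h0
        have h1 : q - p = 0 := Fin.ext (by simpa using h0)
        exact hpq (sub_eq_zero.mp h1).symm
      obtain ⟨k', hk'⟩ : ∃ k', ((q - p : Fin t) : ℕ) = k' + 1 :=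
        ⟨((q - p : Fin t) : ℕ) - 1, by omega⟩
      rw [hk', pow_succ, ← mul_assoc, map_mul, hI]
      exact Ideal.mul_mem_left _ _ (Ideal.subset_span rfl)
  -- the standard polynomial as a multilinear map
  set F : MultilinearMap ℤ (fun _ : Fin (2*t) => Matrix (Fin t) (Fin t) T)
      (Matrix (Fin t) (Fin t) T) :=
    ∑ π : Equiv.Perm (Fin (2*t)), (Equiv.Perm.sign π : ℤ) •
      (MultilinearMap.mkPiAlgebraFin ℤ (2*t) (Matrix (Fin t) (Fin t) T)).domDomCongr π with hF
  have hFapply : ∀ x : Fin (2*t) → Matrix (Fin t) (Fin t) T,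
      F x = ∑ π : Equiv.Perm (Fin (2*t)),
        (Equiv.Perm.sign π : ℤ) • (List.ofFn fun i => x (π i)).prod := by
    intro x
    rw [hF]
    erw [MultilinearMap.sum_apply]
    apply Finset.sum_congr rfl
    intro π _
    rfl
  have hsplit : (fun i => mu σ (r i)) =
      (fun i => D i) + (fun i => N i) := by
    funext i
    simp [hN]
  suffices h : F (fun i => mu σ (r i)) = 0 by
    rw [hFapply] at h
    exact h
  rw [hsplit, MultilinearMap.map_add_univ]
  apply Finset.sum_eq_zero
  intro s _
  rw [hFapply]
  by_cases hs : t + 1 ≤ s.card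
  · -- at least t+1 commuting (diagonal) arguments
    apply standard_sum_commuting le_rfl _ s hs
    intro i hi j hj
    rw [Finset.piecewise_eq_of_mem _ _ _ hi, Finset.piecewise_eq_of_mem _ _ _ hj]
    rw [hD, Matrix.diagonal_mul_diagonal, Matrix.diagonal_mul_diagonal]
    exact congrArg Matrix.diagonal (funext fun k => mul_comm _ _)
  · -- at least t arguments with entries in I
    apply Finset.sum_eq_zero
    intro π _
    have hzero : ∀ (z : Fin (2*t) → Matrix (Fin t) (Fin t) T), (∀ i ∉ s, z i = N i) →
        (List.ofFn fun i => z (π i)).prod = 0 := by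
      intro z hz
      apply prod_eq_zero_of_many_entries_mem I hIt _ ((sᶜ).image π.symm)
      · rw [Finset.card_image_of_injective _ π.symm.injective, Finset.card_compl,
          Fintype.card_fin]
        omega
      · intro i hi p q
        rw [Finset.mem_image] at hi
        obtain ⟨j, hj, rfl⟩ := hi
        rw [Finset.mem_compl] at hj
        rw [Equiv.apply_symm_apply, hz j hj]
        exact hNmem j p q
    rw [hzero (s.piecewise (fun i => D i) fun i => N i)
        (fun i hi => Finset.piecewise_eq_of_notMem _ _ _ hi), zsmul_zero]
end

section
/- Suppose the standard identity S_m = 0 holds on R, i.e. Σ_{π ∈ Sym(m)} sgn(π) a_{π(1)} ⋯ a_{π(m)} = 0 for all a₁,…,a_m ∈ R. Then the standard identity of degree (m−1)t²+1 holds on the image of μ: for any tuples r⁽¹⁾, …, r⁽⁽ᵐ⁻¹⁾ᵗ²⁺¹⁾ : Fin t → R, one has Σ_{π ∈ Sym((m−1)t²+1)} sgn(π) · μ(r^{(π(1))}) ⋯ μ(r^{(π((m−1)t²+1))}) = 0 in M_t(R[z]/(z^t)). (This expresses that S_{(m−1)t²+1} = 0 is an identity on R[w,σ]/(w^t).) 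-/
open Polynomial
open Polynomial

/-- Auxiliary: pull constants out of a signed sum of sandwiched products. -/
lemma mySandwichSum {A : Type*} [Ring A] {m : ℕ} (b : Fin m → A)
    (hb : ∑ ρ : Equiv.Perm (Fin m),
      (Equiv.Perm.sign ρ : ℤ) • (List.ofFn fun i => b (ρ i)).prod = 0)
    (L Rt : A) :
    ∑ ρ : Equiv.Perm (Fin m),
      (Equiv.Perm.sign ρ : ℤ) • (L * (List.ofFn fun i => b (ρ i)).prod * Rt) = 0 := by
  have h : ∀ ρ : Equiv.Perm (Fin m),
      (Equiv.Perm.sign ρ : ℤ) • (L * (List.ofFn fun i => b (ρ i)).prod * Rt)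
      = L * ((Equiv.Perm.sign ρ : ℤ) • (List.ofFn fun i => b (ρ i)).prod) * Rt := by
    intro ρ; rw [mul_smul_comm, smul_mul_assoc]
  simp_rw [h]
  rw [← Finset.sum_mul, ← Finset.mul_sum, hb, mul_zero, zero_mul]

/-- Split an ordered product over `Fin N` into three consecutive parts. -/
lemma myProdThreeParts {M : Type*} [Monoid M] {N p m q : ℕ} (hN : N = p + m + q)
    (v : Fin N → M) :
    (List.ofFn v).prod =
      (List.ofFn fun i : Fin p => v ⟨i, by omega⟩).prod *
      (List.ofFn fun i : Fin m => v ⟨p + i, by omega⟩).prod *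
      (List.ofFn fun i : Fin q => v ⟨p + m + i, by omega⟩).prod := by
  subst hN
  rw [List.ofFn_add (f := v), List.prod_append,
    List.ofFn_add (f := fun i : Fin (p + m) => v (Fin.castLE (Nat.le_add_right (p + m) q) i)), List.prod_append]
  rfl

def myGoodAt (m N : ℕ) (P : Finset (Fin N)) (p : ℕ) : Prop :=
  p + m ≤ N ∧ ∀ j : Fin N, p ≤ (j : ℕ) → (j : ℕ) < p + m → j ∉ P

lemma myExistsGoodAt {m s N : ℕ} (hm : 0 < m) {P : Finset (Fin N)}
    (hP : P.card ≤ s) (hN : m * (s + 1) ≤ N) : ∃ p, myGoodAt m N P p := by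
  by_contra hcon
  push_neg at hcon
  have hchoice : ∀ i : Fin (s + 1), ∃ j : Fin N,
      (i : ℕ) * m ≤ (j : ℕ) ∧ (j : ℕ) < (i : ℕ) * m + m ∧ j ∈ P := by
    intro i
    have hle : (i : ℕ) * m + m ≤ N := by
      have : ((i : ℕ) + 1) * m ≤ (s + 1) * m := by
        apply Nat.mul_le_mul_right
        omega
      calc (i : ℕ) * m + m = ((i : ℕ) + 1) * m := by ring
        _ ≤ (s + 1) * m := this
        _ = m * (s + 1) := by ring
        _ ≤ N := hN
    have := hcon ((i : ℕ) * m)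
    rw [myGoodAt] at this
    push_neg at this
    obtain ⟨j, h1, h2, h3⟩ := this hle
    exact ⟨j, h1, h2, h3⟩
  choose f hf1 hf2 hf3 using hchoice
  have hinj : Set.InjOn f ↑(Finset.univ : Finset (Fin (s + 1))) := by
    intro i _ i' _ hii
    have h1 := hf1 i; have h2 := hf2 i
    have h1' := hf1 i'; have h2' := hf2 i'
    rw [hii] at h1 h2
    have : (i : ℕ) = (i' : ℕ) := by
      have e1 : ((f i' : ℕ)) / m = (i : ℕ) := Nat.div_eq_of_lt_le h1 (by
        calc (f i' : ℕ) < (i : ℕ) * m + m := h2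
          _ = ((i : ℕ) + 1) * m := by ring)
      have e2 : ((f i' : ℕ)) / m = (i' : ℕ) := Nat.div_eq_of_lt_le h1' (by
        calc (f i' : ℕ) < (i' : ℕ) * m + m := h2'
          _ = ((i' : ℕ) + 1) * m := by ring)
      omega
    exact Fin.ext this
  have hcard : (Finset.univ : Finset (Fin (s + 1))).card ≤ P.card := by
    apply Finset.card_le_card_of_injOn f (fun i _ => hf3 i) hinj
  simp at hcard
  omega

open Classical in
noncomputable def myBlockOf (m N : ℕ) (P : Finset (Fin N)) : ℕ :=
  if h : ∃ p, myGoodAt m N P p then Nat.find h else 0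

open Classical in
lemma myBlockOf_goodAt {m N : ℕ} {P : Finset (Fin N)} (h : ∃ p, myGoodAt m N P p) :
    myGoodAt m N P (myBlockOf m N P) := by
  rw [myBlockOf, dif_pos h]
  exact Nat.find_spec h
lemma myStdVanish {A : Type*} [Ring A] (m s N : ℕ) (hm : 0 < m)
    (hN : m * (s + 1) ≤ N) (B : Set A)
    (hB : ∀ b : Fin m → A, (∀ i, b i ∈ B) →
      ∑ ρ : Equiv.Perm (Fin m),
        (Equiv.Perm.sign ρ : ℤ) • (List.ofFn fun i => b (ρ i)).prod = 0)
    (x : Fin N → A) (T : Finset (Fin N)) (hT : T.card ≤ s)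
    (hTx : ∀ j, x j ∉ B → j ∈ T) :
    ∑ π : Equiv.Perm (Fin N),
      (Equiv.Perm.sign π : ℤ) • (List.ofFn fun i => x (π i)).prod = 0 := by
  classical
  set F : Equiv.Perm (Fin N) → A :=
    fun π => (Equiv.Perm.sign π : ℤ) • (List.ofFn fun i => x (π i)).prod with hF
  set bad : Equiv.Perm (Fin N) → Finset (Fin N) :=
    fun π => Finset.univ.filter fun j => x (π j) ∉ B with hbad
  have hbadcard : ∀ π, (bad π).card ≤ s := by
    intro π
    have : (bad π).card ≤ T.card := by
      apply Finset.card_le_card_of_injOn (fun j => π j)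
      · intro j hj
        rw [hbad] at hj
        simp only [Finset.mem_filter] at hj
        exact hTx _ (by simpa using hj)
      · intro a _ b _ hab
        exact π.injective hab
    omega
  have hex : ∀ π, ∃ p, myGoodAt m N (bad π) p :=
    fun π => myExistsGoodAt hm (hbadcard π) hN
  set blk : Equiv.Perm (Fin N) → ℕ := fun π => myBlockOf m N (bad π) with hblk
  have hgood : ∀ π, myGoodAt m N (bad π) (blk π) := fun π => myBlockOf_goodAt (hex π)
  set c : Equiv.Perm (Fin N) → Finset (Fin N) × (Fin N → Option (Fin N)) :=
    fun π => (bad π,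
      fun j => if blk π ≤ (j : ℕ) ∧ (j : ℕ) < blk π + m then none else some (π j)) with hc
  rw [← Finset.sum_fiberwise_of_maps_to
    (g := c) (t := Finset.univ.image c)
    (fun π _ => Finset.mem_image_of_mem c (Finset.mem_univ π)) F]
  apply Finset.sum_eq_zero
  intro d hd
  obtain ⟨π₀, -, hπ₀⟩ := Finset.mem_image.mp hd
  subst hπ₀
  set p : ℕ := blk π₀ with hp
  obtain ⟨hg1, hg2⟩ := hgood π₀
  -- the block embedding
  have hι : ∀ i : Fin m, p + (i : ℕ) < N := fun i => by omega
  set ι : Fin m ↪ Fin N :=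
    ⟨fun i => ⟨p + i, hι i⟩, by
      intro a b hab
      apply Fin.ext
      have : p + (a : ℕ) = p + (b : ℕ) := congrArg Fin.val hab
      omega⟩ with hιdef
  have hιval : ∀ i : Fin m, ((ι i : Fin N) : ℕ) = p + i := fun i => rfl
  have hrange : ∀ j : Fin N, j ∈ Set.range ι ↔ p ≤ (j : ℕ) ∧ (j : ℕ) < p + m := by
    intro j
    constructor
    · rintro ⟨i, rfl⟩
      rw [hιval]
      omega
    · rintro ⟨h1, h2⟩
      refine ⟨⟨(j : ℕ) - p, by omega⟩, ?_⟩
      apply Fin.ext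
      rw [hιval]
      simp
      omega
  set Φ : Equiv.Perm (Fin m) → Equiv.Perm (Fin N) :=
    fun ρ => ρ.viaFintypeEmbedding ι with hΦ
  have hΦι : ∀ ρ i, Φ ρ (ι i) = ι (ρ i) := by
    intro ρ i; exact Equiv.Perm.viaFintypeEmbedding_apply_image ρ ι i
  have hΦfix : ∀ (ρ) (j : Fin N), ¬(p ≤ (j : ℕ) ∧ (j : ℕ) < p + m) → Φ ρ j = j := by
    intro ρ j hj
    apply Equiv.Perm.viaFintypeEmbedding_apply_notMem_range
    rw [hrange]; exact hj
  have hblockgood : ∀ j : Fin N, p ≤ (j : ℕ) → (j : ℕ) < p + m → x (π₀ j) ∈ B := by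
    intro j h1 h2
    have := hg2 j h1 h2
    rw [hbad] at this
    simp only [Finset.mem_filter, Finset.mem_univ, true_and, not_not] at this
    exact this
  -- (a) the classifier is constant on the coset
  have hbadeq : ∀ ρ, bad (π₀ * Φ ρ) = bad π₀ := by
    intro ρ
    ext j
    rw [hbad]
    simp only [Finset.mem_filter, Finset.mem_univ, true_and]
    simp only [Equiv.Perm.mul_apply]
    by_cases hj : p ≤ (j : ℕ) ∧ (j : ℕ) < p + m
    · obtain ⟨i, rfl⟩ := (hrange j).mpr hj
      rw [hΦι]
      have h1 : x (π₀ (ι (ρ i))) ∈ B := by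
        apply hblockgood <;> rw [hιval] <;> omega
      have h2 : x (π₀ (ι i)) ∈ B := by
        apply hblockgood <;> rw [hιval] <;> omega
      simp [h1, h2]
    · rw [hΦfix ρ j hj]
  have hblkeq : ∀ ρ, blk (π₀ * Φ ρ) = p := by
    intro ρ
    rw [hblk]
    simp only
    rw [hbadeq ρ, hp, hblk]
  have hceq : ∀ ρ, c (π₀ * Φ ρ) = c π₀ := by
    intro ρ
    rw [hc]
    simp only [Prod.mk.injEq]
    refine ⟨hbadeq ρ, ?_⟩
    funext j
    rw [hblkeq ρ]
    by_cases hj : p ≤ (j : ℕ) ∧ (j : ℕ) < p + m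
    · rw [if_pos hj, if_pos hj]
    · rw [if_neg hj, if_neg hj, Equiv.Perm.mul_apply, hΦfix ρ j hj]
  -- (c) surjectivity onto the fiber
  have hsurj : ∀ π : Equiv.Perm (Fin N), c π = c π₀ → ∃ ρ, π = π₀ * Φ ρ := by
    intro π h
    have h1 : bad π = bad π₀ := congrArg Prod.fst h
    have hblkπ : blk π = p := by rw [hblk]; simp only; rw [h1, hp, hblk]
    have h2 : ∀ j : Fin N, ¬(p ≤ (j : ℕ) ∧ (j : ℕ) < p + m) → π j = π₀ j := by
      intro j hj
      have := congrFun (congrArg Prod.snd h) j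
      simp only [hc, hblkπ, hp] at this
      rw [if_neg hj, if_neg hj] at this
      exact Option.some_injective _ this
    -- the inverse image of the block under π₀⁻¹ ∘ π maps block to block
    have hmem : ∀ i : Fin m, p ≤ ((π₀⁻¹ (π (ι i)) : Fin N) : ℕ) ∧
        ((π₀⁻¹ (π (ι i)) : Fin N) : ℕ) < p + m := by
      intro i
      by_contra hcon
      have h3 := h2 _ hcon
      rw [(Equiv.Perm.eq_inv_iff_eq.mp rfl : π₀ (π₀⁻¹ (π (ι i))) = π (ι i))] at h3
      have heq : π₀⁻¹ (π (ι i)) = ι i := π.injective h3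
      rw [heq] at hcon
      exact hcon ⟨by rw [hιval]; omega, by rw [hιval]; omega⟩
    set g : Fin m → Fin m := fun i => ⟨((π₀⁻¹ (π (ι i)) : Fin N) : ℕ) - p, by
      have := hmem i; omega⟩ with hg
    have hgι : ∀ i, (ι (g i) : Fin N) = π₀⁻¹ (π (ι i)) := by
      intro i
      apply Fin.ext
      rw [hιval]
      have := hmem i
      simp [hg] at this ⊢
      omega
    have hginj : Function.Injective g := by
      intro a b hab
      have : (ι (g a) : Fin N) = ι (g b) := congrArg _ hab
      rw [hgι, hgι] at this
      exact ι.injective (π.injective (π₀⁻¹.injective this))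
    let ρ : Equiv.Perm (Fin m) := Equiv.ofBijective g (Finite.injective_iff_bijective.mp hginj)
    have hρ : ∀ i, ρ i = g i := fun i => rfl
    refine ⟨ρ, ?_⟩
    apply Equiv.ext
    intro j
    rw [Equiv.Perm.mul_apply]
    by_cases hj : p ≤ (j : ℕ) ∧ (j : ℕ) < p + m
    · obtain ⟨i, rfl⟩ := (hrange j).mpr hj
      rw [hΦι, hρ, ← (Equiv.Perm.eq_inv_iff_eq.mp rfl : π₀ (π₀⁻¹ (π (ι i))) = π (ι i)), ← hgι]
    · rw [hΦfix ρ j hj, h2 j hj]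
  -- (b) injectivity
  have hinj : Function.Injective (fun ρ : Equiv.Perm (Fin m) => π₀ * Φ ρ) := by
    intro ρ ρ' hρρ
    simp only at hρρ
    have hΦeq : Φ ρ = Φ ρ' := mul_left_cancel hρρ
    apply Equiv.ext
    intro i
    have : Φ ρ (ι i) = Φ ρ' (ι i) := by rw [hΦeq]
    rw [hΦι, hΦι] at this
    exact ι.injective this
  -- the fiber is the image
  have hfib : (Finset.univ.filter fun π => c π = c π₀)
      = Finset.univ.image (fun ρ : Equiv.Perm (Fin m) => π₀ * Φ ρ) := by
    ext π
    simp only [Finset.mem_filter, Finset.mem_univ, true_and, Finset.mem_image]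
    constructor
    · intro h
      obtain ⟨ρ, hρ⟩ := hsurj π h
      exact ⟨ρ, hρ.symm⟩
    · rintro ⟨ρ, -, rfl⟩
      exact hceq ρ
  rw [hfib, Finset.sum_image (fun ρ _ ρ' _ h => hinj h)]
  -- now compute the sum over the coset
  set q : ℕ := N - (p + m) with hq
  have hNsplit : N = p + m + q := by omega
  set L : A := (List.ofFn fun i : Fin p => x (π₀ ⟨(i : ℕ), by omega⟩)).prod with hL
  set Rt : A := (List.ofFn fun i : Fin q => x (π₀ ⟨p + m + (i : ℕ), by omega⟩)).prod with hRt
  set b : Fin m → A := fun i => x (π₀ (ι i)) with hb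
  have hbmem : ∀ i, b i ∈ B := by
    intro i
    apply hblockgood <;> rw [hιval] <;> omega
  have hprod : ∀ ρ : Equiv.Perm (Fin m),
      (List.ofFn fun j => x ((π₀ * Φ ρ) j)).prod
      = L * (List.ofFn fun i => b (ρ i)).prod * Rt := by
    intro ρ
    have hfix' : ∀ (j : Fin N), ¬(p ≤ (j : ℕ) ∧ (j : ℕ) < p + m) →
        x ((π₀ * Φ ρ) j) = x (π₀ j) := by
      intro j hj
      rw [Equiv.Perm.mul_apply, hΦfix ρ j hj]
    rw [myProdThreeParts hNsplit]
    congr 1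
    · congr 1
      · exact congrArg List.prod (congrArg List.ofFn (funext fun i => hfix' _ (by
          intro hcon
          obtain ⟨h1, h2⟩ := hcon
          simp only [] at h1 h2
          have := i.isLt
          omega)))
      · refine congrArg List.prod (congrArg List.ofFn (funext fun i => ?_))
        rw [Equiv.Perm.mul_apply]
        show x (π₀ (Φ ρ (ι i))) = b (ρ i)
        rw [hΦι, hb]
    · exact congrArg List.prod (congrArg List.ofFn (funext fun i => hfix' _ (by
        intro hcon
        obtain ⟨h1, h2⟩ := hcon
        simp only [] at h1 h2
        have := i.isLt
        omega)))
  have hsign : ∀ ρ : Equiv.Perm (Fin m),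
      (Equiv.Perm.sign (π₀ * Φ ρ) : ℤ)
        = (Equiv.Perm.sign π₀ : ℤ) * (Equiv.Perm.sign ρ : ℤ) := by
    intro ρ
    rw [map_mul]
    push_cast
    congr 1
    rw [hΦ]
    simp only
    rw [Equiv.Perm.viaFintypeEmbedding_sign]
  calc ∑ ρ : Equiv.Perm (Fin m), F (π₀ * Φ ρ)
      = (Equiv.Perm.sign π₀ : ℤ) • ∑ ρ : Equiv.Perm (Fin m),
        (Equiv.Perm.sign ρ : ℤ) • (L * (List.ofFn fun i => b (ρ i)).prod * Rt) := by
        rw [Finset.smul_sum]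
        apply Finset.sum_congr rfl
        intro ρ _
        rw [hF]
        simp only
        rw [hprod ρ, hsign ρ, mul_smul]
    _ = 0 := by rw [mySandwichSum b (hB b hbmem) L Rt, smul_zero]
section Ealg

open Fin.NatCast

variable {R : Type*} [Ring R] {t : ℕ}

/-- The homogeneous components: `Ee σ k a` has `(i,j)` entry
`σ^i(a) z^k` when `j = i + k (mod t)` and `0` otherwise. -/
noncomputable def Ee [NeZero t] (σ : R →+* R) (k : ℕ) (a : R) :
    Matrix (Fin t) (Fin t) (TruncPoly R t) :=
  Matrix.of fun i j =>
    if j = i + (k : Fin t) then truncMk R t (C ((⇑σ)^[(i : ℕ)] a) * X ^ k) else 0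

variable [NeZero t] (σ : R →+* R)

lemma myIterateMod (hσ : ∀ r : R, (⇑σ)^[t] r = r) (n : ℕ) (a : R) :
    (⇑σ)^[n % t] a = (⇑σ)^[n] a := by
  have key : ∀ (q : ℕ) (x : R), (⇑σ)^[t * q] x = x := by
    intro q
    induction q with
    | zero => intro x; simp
    | succ q ih =>
      intro x
      rw [Nat.mul_succ, Function.iterate_add_apply, hσ x, ih]
  conv_rhs => rw [← Nat.div_add_mod n t]
  rw [Function.iterate_add_apply, key]

lemma myValAdd (i : Fin t) (k : ℕ) : ((i + (k : Fin t) : Fin t) : ℕ) = ((i : ℕ) + k) % t := by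
  simp only [Fin.add_def, Fin.val_natCast]
  exact Nat.add_mod_mod _ _ _

lemma myXpow_t : (truncMk R t X) ^ t = 0 := by
  rw [← map_pow]
  have : truncMk R t (X ^ t) = truncMk R t 0 := RingQuot.mkRingHom_rel ⟨rfl, rfl⟩
  rw [this, map_zero]

lemma Ee_mul (hσ : ∀ r : R, (⇑σ)^[t] r = r) (k l : ℕ) (a b : R) :
    Ee (t := t) σ k a * Ee σ l b = Ee σ (k + l) (a * (⇑σ)^[k] b) := by
  ext i j
  rw [Matrix.mul_apply]
  simp only [Ee, Matrix.of_apply, ite_mul, zero_mul]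
  rw [Finset.sum_ite_eq' Finset.univ (i + (k : Fin t))
    (fun p => truncMk R t (C ((⇑σ)^[(i : ℕ)] a) * X ^ k) *
      (if j = p + (l : Fin t) then truncMk R t (C ((⇑σ)^[(p : ℕ)] b) * X ^ l) else 0))]
  rw [if_pos (Finset.mem_univ _)]
  rw [mul_ite, mul_zero]
  have hcond : (j = i + (k : Fin t) + (l : Fin t)) ↔ (j = i + ((k + l : ℕ) : Fin t)) := by
    rw [Nat.cast_add, add_assoc]
  by_cases hj : j = i + ((k + l : ℕ) : Fin t)
  · rw [if_pos (hcond.mpr hj), if_pos hj]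
    rw [← map_mul]
    congr 1
    rw [mul_assoc, ← mul_assoc (X ^ k), X_pow_mul, mul_assoc, ← pow_add, ← mul_assoc, ← C_mul]
    congr 2
    rw [myValAdd, myIterateMod σ hσ, iterate_map_mul, ← Function.iterate_add_apply]
  · rw [if_neg (fun h => hj (hcond.mp h)), if_neg hj]

lemma Ee_one : Ee (t := t) σ 0 1 = 1 := by
  ext i j
  simp only [Ee, Matrix.of_apply, Nat.cast_zero, add_zero, pow_zero, mul_one]
  rw [Function.iterate_fixed (map_one σ), map_one, map_one]
  rw [Matrix.one_apply]
  by_cases h : i = j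
  · rw [if_pos h.symm, if_pos h]
  · rw [if_neg (fun hh => h hh.symm), if_neg h]

lemma Ee_zero_right (k : ℕ) : Ee (t := t) σ k 0 = 0 := by
  ext i j
  simp only [Ee, Matrix.of_apply, Matrix.zero_apply]
  have : (⇑σ)^[(i : ℕ)] (0 : R) = 0 := Function.iterate_fixed (map_zero σ) _
  rw [this, map_zero, zero_mul, map_zero, ite_self]

lemma Ee_add (k : ℕ) (a b : R) :
    Ee (t := t) σ k (a + b) = Ee σ k a + Ee σ k b := by
  ext i j
  simp only [Ee, Matrix.of_apply, Matrix.add_apply]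
  rw [iterate_map_add, map_add, add_mul, map_add]
  by_cases h : j = i + (k : Fin t)
  · rw [if_pos h, if_pos h, if_pos h]
  · rw [if_neg h, if_neg h, if_neg h, add_zero]

lemma Ee_zero_of_le (k : ℕ) (hk : t ≤ k) (a : R) : Ee (t := t) σ k a = 0 := by
  ext i j
  simp only [Ee, Matrix.of_apply, Matrix.zero_apply]
  have : truncMk R t (C ((⇑σ)^[(i : ℕ)] a) * X ^ k) = 0 := by
    rw [map_mul, map_pow]
    have hsplit : k = t + (k - t) := by omega
    rw [hsplit, pow_add, myXpow_t, zero_mul, mul_zero]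
  rw [this, ite_self]

/-- The diagonal embedding `R → M_t(R[z]/(z^t))`, `a ↦ diag(σ^i(a))`, as a ring hom. -/
noncomputable def Dhom (hσ : ∀ r : R, (⇑σ)^[t] r = r) :
    R →+* Matrix (Fin t) (Fin t) (TruncPoly R t) where
  toFun := Ee σ 0
  map_one' := Ee_one σ
  map_mul' := fun a b => by
    show Ee σ 0 (a * b) = Ee σ 0 a * Ee σ 0 b
    rw [Ee_mul σ hσ 0 0 a b]
    simp
  map_zero' := Ee_zero_right σ 0
  map_add' := Ee_add σ 0

lemma Dhom_apply (hσ : ∀ r : R, (⇑σ)^[t] r = r) (a : R) : Dhom σ hσ a = Ee σ 0 a := rfl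

/-- `mu` decomposes into homogeneous components. -/
lemma mu_eq_sum (r : Fin t → R) : mu σ r = ∑ k : Fin t, Ee σ (k : ℕ) (r k) := by
  ext i j
  rw [mu]
  simp only [Matrix.of_apply, Matrix.sum_apply, Ee, Fin.cast_val_eq_self]
  have hcond : ∀ k : Fin t, (j = i + k) ↔ (k = j - i) := by
    intro k
    constructor
    · intro h
      rw [h, add_sub_cancel_left]
    · intro h
      rw [h, add_comm, sub_add_cancel]
  simp only [hcond]
  rw [Finset.sum_ite_eq' Finset.univ (j - i)
    (fun k => truncMk R t (C ((⇑σ)^[(i : ℕ)] (r k)) * X ^ (k : ℕ)))]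
  rw [if_pos (Finset.mem_univ _)]

/-- ordered product of homogeneous elements is homogeneous. -/
lemma prod_Ee (hσ : ∀ r : R, (⇑σ)^[t] r = r) :
    ∀ {n : ℕ} (k : Fin n → ℕ) (a : Fin n → R), ∃ c : R,
      (List.ofFn fun i => Ee (t := t) σ (k i) (a i)).prod = Ee σ (∑ i, k i) c := by
  intro n
  induction n with
  | zero =>
    intro k a
    exact ⟨1, by simp [Ee_one σ]⟩
  | succ n ih =>
    intro k a
    obtain ⟨c, hc⟩ := ih (k ∘ Fin.succ) (a ∘ Fin.succ)
    refine ⟨a 0 * (⇑σ)^[k 0] c, ?_⟩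
    rw [List.ofFn_succ, List.prod_cons]
    have : (List.ofFn fun i : Fin n => Ee (t := t) σ (k i.succ) (a i.succ)).prod
        = Ee σ (∑ i : Fin n, k i.succ) c := hc
    rw [this, Ee_mul σ hσ, Fin.sum_univ_succ]

end Ealg
/-- Expanding an ordered product of sums (noncommutative multilinearity). -/
lemma myProdSumOrdered {M : Type*} [NonAssocSemiring M] {ι : Type*} [Fintype ι] :
    ∀ {n : ℕ} (a : Fin n → ι → M),
      (List.ofFn fun i => ∑ k : ι, a i k).prod
        = ∑ f : Fin n → ι, (List.ofFn fun i => a i (f i)).prod := by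
  intro n
  induction n with
  | zero =>
    intro a
    simp
  | succ n ih =>
    intro a
    rw [List.ofFn_succ, List.prod_cons, ih (fun i => a i.succ)]
    rw [Finset.sum_mul_sum]
    rw [← (Fin.consEquiv fun _ => ι).sum_comp
      (fun f : Fin (n + 1) → ι => (List.ofFn fun i => a i (f i)).prod)]
    rw [Fintype.sum_prod_type]
    apply Finset.sum_congr rfl
    intro k _
    apply Finset.sum_congr rfl
    intro g _
    rw [List.ofFn_succ, List.prod_cons]
    rfl
/-- If the standard identity `S_m = 0` holds on `R`, then the standard identity
`S_{(m-1)t²+1} = 0` holds on the image of `μ`, i.e. on `R[w,σ]/(w^t)`. -/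
theorem standard_identity_mu_of_PI (R : Type*) [Ring R] (t m : ℕ) (ht : 1 ≤ t)
    (σ : R →+* R) (hσ : ∀ r : R, (⇑σ)^[t] r = r)
    (hR : ∀ a : Fin m → R,
      ∑ π : Equiv.Perm (Fin m),
        (Equiv.Perm.sign π : ℤ) • (List.ofFn fun i => a (π i)).prod = 0)
    (r : Fin ((m - 1) * t ^ 2 + 1) → Fin t → R) :
    ∑ π : Equiv.Perm (Fin ((m - 1) * t ^ 2 + 1)),
      (Equiv.Perm.sign π : ℤ) • (List.ofFn fun i => mu σ (r (π i))).prod = 0 := by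
  classical
  haveI : NeZero t := ⟨by omega⟩
  by_cases hm2 : m ≤ 1
  -- degenerate case: `R` is trivial
  · haveI hFsub : Subsingleton (Fin m) := ⟨fun a b => Fin.ext (by
      have := a.isLt; have := b.isLt; omega)⟩
    haveI hPsub : Subsingleton (Equiv.Perm (Fin m)) :=
      ⟨fun π π' => Equiv.ext fun i => Subsingleton.elim _ _⟩
    have h := hR (fun _ => (1 : R))
    rw [Finset.sum_eq_single (1 : Equiv.Perm (Fin m))
      (fun b _ hb => absurd (Subsingleton.elim b 1) hb)
      (fun h1 => absurd (Finset.mem_univ _) h1)] at h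
    simp at h
    haveI : Subsingleton R := subsingleton_of_zero_eq_one h.symm
    haveI : Subsingleton (TruncPoly R t) := by
      constructor
      intro a b
      obtain ⟨a', rfl⟩ := RingQuot.mkRingHom_surjective _ a
      obtain ⟨b', rfl⟩ := RingQuot.mkRingHom_surjective _ b
      rw [Subsingleton.elim a' b']
    exact Subsingleton.elim _ _
  push_neg at hm2
  -- main case : `2 ≤ m`
  have key : ∀ π : Equiv.Perm (Fin ((m - 1) * t ^ 2 + 1)),
      (Equiv.Perm.sign π : ℤ) • (List.ofFn fun i => mu σ (r (π i))).prod
      = ∑ g : Fin ((m - 1) * t ^ 2 + 1) → Fin t, (Equiv.Perm.sign π : ℤ) •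
          (List.ofFn fun i => Ee σ ((g (π i) : ℕ)) (r (π i) (g (π i)))).prod := by
    intro π
    have h1 : (List.ofFn fun i => mu σ (r (π i))).prod
        = ∑ f : Fin ((m - 1) * t ^ 2 + 1) → Fin t,
            (List.ofFn fun i => Ee σ ((f i : ℕ)) (r (π i) (f i))).prod := by
      have h2 : (fun i : Fin ((m - 1) * t ^ 2 + 1) => mu σ (r (π i)))
          = fun i => ∑ k : Fin t, Ee σ (k : ℕ) (r (π i) k) :=
        funext fun i => mu_eq_sum σ (r (π i))
      rw [h2]
      exact myProdSumOrdered (fun (i : Fin ((m - 1) * t ^ 2 + 1)) (k : Fin t) => Ee σ (k : ℕ) (r (π i) k))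
    rw [h1]
    refine Finset.smul_sum.trans ?_
    exact (Equiv.sum_comp
      (⟨fun g : Fin ((m - 1) * t ^ 2 + 1) → Fin t => g ∘ π, fun g => g ∘ π.symm,
        fun g => funext fun j => by simp, fun g => funext fun j => by simp⟩ :
        (Fin ((m - 1) * t ^ 2 + 1) → Fin t) ≃ (Fin ((m - 1) * t ^ 2 + 1) → Fin t))
      (fun f => (Equiv.Perm.sign π : ℤ) •
        (List.ofFn fun i => Ee σ ((f i : ℕ)) (r (π i) (f i))).prod)).symm
  rw [Finset.sum_congr rfl (fun π _ => key π), Finset.sum_comm]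
  apply Finset.sum_eq_zero
  intro g _
  by_cases hcase : t ≤ (Finset.univ.filter fun j : Fin ((m - 1) * t ^ 2 + 1) => g j ≠ 0).card
  -- case 1 : total degree overflows, every product vanishes
  · apply Finset.sum_eq_zero
    intro π _
    obtain ⟨c, hc⟩ := prod_Ee σ hσ (fun i => (g (π i) : ℕ)) (fun i => r (π i) (g (π i)))
    have hsum : t ≤ ∑ i : Fin ((m - 1) * t ^ 2 + 1), (g (π i) : ℕ) := by
      have h1 : ∑ i : Fin ((m - 1) * t ^ 2 + 1), (g (π i) : ℕ) = ∑ j : Fin ((m - 1) * t ^ 2 + 1), (g j : ℕ) :=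
        Equiv.sum_comp π (fun j => (g j : ℕ))
      have h2 : (Finset.univ.filter fun j : Fin ((m - 1) * t ^ 2 + 1) => g j ≠ 0).card ≤ ∑ j : Fin ((m - 1) * t ^ 2 + 1), (g j : ℕ) := by
        rw [Finset.card_eq_sum_ones]
        calc ∑ _j ∈ Finset.univ.filter fun j : Fin ((m - 1) * t ^ 2 + 1) => g j ≠ 0, 1
            ≤ ∑ j ∈ Finset.univ.filter fun j : Fin ((m - 1) * t ^ 2 + 1) => g j ≠ 0, (g j : ℕ) := by
              apply Finset.sum_le_sum
              intro j hj
              simp only [Finset.mem_filter] at hj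
              have : (g j : ℕ) ≠ 0 := fun h0 => hj.2 (by
                apply Fin.ext
                simpa using h0)
              omega
          _ ≤ ∑ j : Fin ((m - 1) * t ^ 2 + 1), (g j : ℕ) :=
              Finset.sum_le_sum_of_subset (Finset.filter_subset _ _)
      omega
    rw [hc, Ee_zero_of_le σ _ hsum c]
    exact smul_zero _
  -- case 2 : at most `t - 1` arguments are outside the base ring
  · push_neg at hcase
    have hBzero : ∀ b : Fin m → Matrix (Fin t) (Fin t) (TruncPoly R t),
        (∀ i, b i ∈ Set.range (Dhom σ hσ)) →
        ∑ ρ : Equiv.Perm (Fin m),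
          (Equiv.Perm.sign ρ : ℤ) • (List.ofFn fun i => b (ρ i)).prod = 0 := by
      intro b hb
      choose aa haa using hb
      have hbfun : b = fun i => Dhom σ hσ (aa i) := funext fun i => (haa i).symm
      rw [hbfun]
      have hterm : ∀ ρ : Equiv.Perm (Fin m),
          Dhom σ hσ ((Equiv.Perm.sign ρ : ℤ) • (List.ofFn fun i => aa (ρ i)).prod)
          = (Equiv.Perm.sign ρ : ℤ) •
              (List.ofFn fun i => Dhom σ hσ (aa (ρ i))).prod := by
        intro ρ
        rw [map_zsmul, map_list_prod, List.map_ofFn]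
        rfl
      rw [Finset.sum_congr rfl (fun ρ _ => (hterm ρ).symm), ← map_sum, hR aa, map_zero]
    have hNbound : m * ((t - 1) + 1) ≤ (m - 1) * t ^ 2 + 1 := by
      have ht1 : (t - 1) + 1 = t := by omega
      rw [ht1]
      obtain ⟨a, rfl⟩ : ∃ a, m = a + 2 := ⟨m - 2, by omega⟩
      obtain ⟨u, rfl⟩ : ∃ u, t = u + 1 := ⟨t - 1, by omega⟩
      show (a + 2) * (u + 1) ≤ (a + 1) * (u + 1) ^ 2 + 1
      have h1 : 1 ≤ (a + 1) * (u + 1) := Nat.one_le_iff_ne_zero.mpr (by positivity)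
      nlinarith [Nat.mul_le_mul_right u h1]
    exact myStdVanish m (t - 1) ((m - 1) * t ^ 2 + 1) (by omega) hNbound (Set.range (Dhom σ hσ)) hBzero
      (fun j => Ee σ ((g j : ℕ)) (r j (g j)))
      (Finset.univ.filter fun j : Fin ((m - 1) * t ^ 2 + 1) => g j ≠ 0) (by omega)
      (fun j hj => by
        refine Finset.mem_filter.mpr ⟨Finset.mem_univ _, fun h0 => hj ?_⟩
        refine ⟨r j (g j), ?_⟩
        show Dhom σ hσ (r j (g j)) = Ee σ ((g j : ℕ)) (r j (g j))
        rw [Dhom_apply, h0]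
        simp)
end

section
/- Suppose R is commutative and is a ℚ-algebra, σ^t = id, and let A be an n×n matrix with entries in Fin t → R. Set B = μ_n(A) ∈ M_{tn}(R[z]/(z^t)). Then every coefficient of the characteristic polynomial det(xI − B) lies in the image under π∘C of the fixed ring R^σ = {r ∈ R ∣ σ(r) = r}; consequently there exist c₁, …, c_{tn} ∈ R with σ(c_i) = c_i such that B^{tn} + π(c₁)·B^{tn−1} + ⋯ + π(c_{tn−1})·B + π(c_{tn})·I = 0 holds in M_{tn}(R[z]/(z^t)). (This is the Cayley–Hamilton identity with coefficients in R^σ for matrices over the truncated skew polynomial ring R[w,σ]/(w^t).) -/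
open Polynomial

/-- The block map `μ_n`: an `n×n` matrix of coefficient tuples is sent to a
`tn×tn` matrix over `R[z]/(z^t)`, indexed by `Fin n × Fin t`. -/
noncomputable def muBlock {R : Type*} [Ring R] {t n : ℕ} (σ : R →+* R)
    (A : Matrix (Fin n) (Fin n) (Fin t → R)) :
    Matrix (Fin n × Fin t) (Fin n × Fin t) (TruncPoly R t) :=
  Matrix.of fun p q => mu σ (A p.1 q.1) p.2 q.2

namespace CHAux

set_option linter.unusedVariables false
set_option linter.unusedSectionVars false

variable {R : Type*} [CommRing R] {t : ℕ}

theorem trunc_X_pow : truncMk R t (X ^ t) = 0 := by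
  have h := RingQuot.mkRingHom_rel (r := fun p q : R[X] => p = X ^ t ∧ q = 0)
    (x := (X ^ t : R[X])) (y := 0) ⟨rfl, rfl⟩
  simpa using h

theorem truncC_inj (ht : 1 ≤ t) {a b : R} (h : truncMk R t (C a) = truncMk R t (C b)) :
    a = b := by
  have h2 := congrArg (RingQuot.lift ⟨Polynomial.evalRingHom (0 : R), by
    rintro p q ⟨rfl, rfl⟩
    simp [zero_pow (by omega : t ≠ 0)]⟩) h
  simpa [RingQuot.lift_mkRingHom_apply] using h2

def H (R : Type*) [CommRing R] (t d : ℕ) : AddSubgroup (TruncPoly R t) where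
  carrier := {x | ∃ c : R, x = truncMk R t (C c * X ^ d)}
  zero_mem' := ⟨0, by simp⟩
  add_mem' := by
    rintro x y ⟨a, rfl⟩ ⟨b, rfl⟩
    exact ⟨a + b, by rw [← map_add]; congr 1; rw [C_add]; ring⟩
  neg_mem' := by
    rintro x ⟨a, rfl⟩
    exact ⟨-a, by rw [← map_neg]; congr 1; rw [C_neg]; ring⟩

theorem H_mul {d e : ℕ} {x y : TruncPoly R t} (hx : x ∈ H R t d) (hy : y ∈ H R t e) :
    x * y ∈ H R t (d + e) := by
  obtain ⟨a, rfl⟩ := hx; obtain ⟨b, rfl⟩ := hy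
  exact ⟨a * b, by rw [← map_mul]; congr 1; rw [C_mul, pow_add]; ring⟩

theorem one_mem_H : (1 : TruncPoly R t) ∈ H R t 0 := ⟨1, by simp⟩

theorem homog_prod {ι : Type*} (s : Finset ι) (f : ι → Polynomial (TruncPoly R t)) (d : ι → ℕ)
    (h : ∀ i ∈ s, ∀ k, (f i).coeff k ∈ H R t (d i)) (k : ℕ) :
    (∏ i ∈ s, f i).coeff k ∈ H R t (∑ i ∈ s, d i) := by
  induction s using Finset.cons_induction generalizing k with
  | empty =>
    simp only [Finset.prod_empty, Finset.sum_empty, Polynomial.coeff_one]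
    split
    · exact one_mem_H
    · exact (H R t 0).zero_mem
  | cons a s ha ih =>
    rw [Finset.prod_cons, Finset.sum_cons, Polynomial.coeff_mul]
    exact AddSubgroup.sum_mem _ fun p _ =>
      H_mul (h a (Finset.mem_cons_self a s) p.1)
        (ih (fun i hi => h i (Finset.mem_cons_of_mem hi)) p.2)

theorem val_sub_cast (ht : 1 ≤ t) (a b : Fin t) :
    (((a - b : Fin t) : ℕ) : ZMod t) = ((a : ℕ) : ZMod t) - ((b : ℕ) : ZMod t) := by
  haveI : NeZero t := ⟨by omega⟩
  have h1 : ((a - b) + b : Fin t) = a := sub_add_cancel a b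
  have h2 : (((a - b : Fin t) : ℕ) + (b : ℕ)) % t = (a : ℕ) := by
    rw [← Fin.val_add, h1]
  have h3 : ((((a - b : Fin t) : ℕ) + (b : ℕ) : ℕ) : ZMod t) = ((a : ℕ) : ZMod t) := by
    rw [← ZMod.natCast_mod _ t, h2]
  push_cast at h3
  exact eq_sub_of_add_eq h3

theorem t_dvd_sum {n : ℕ} (ht : 1 ≤ t) (τ : Equiv.Perm (Fin n × Fin t)) :
    t ∣ ∑ x : Fin n × Fin t, ((x.2 - (τ x).2 : Fin t) : ℕ) := by
  haveI : NeZero t := ⟨by omega⟩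
  rw [← ZMod.natCast_eq_zero_iff]
  push_cast
  rw [Finset.sum_congr rfl (fun x _ => val_sub_cast ht x.2 (τ x).2),
    Finset.sum_sub_distrib,
    Equiv.sum_comp τ (fun x : Fin n × Fin t => ((x.2 : ℕ) : ZMod t)), sub_self]

theorem H_dvd (ht : 1 ≤ t) {D : ℕ} (hD : t ∣ D) {x : TruncPoly R t} (hx : x ∈ H R t D) :
    ∃ c : R, x = truncMk R t (C c) := by
  obtain ⟨c, rfl⟩ := hx
  rcases Nat.eq_zero_or_pos D with h0 | hpos
  · exact ⟨c, by rw [h0, pow_zero, mul_one]⟩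
  · have hle : t ≤ D := Nat.le_of_dvd hpos hD
    refine ⟨0, ?_⟩
    have hX : (X : R[X]) ^ D = X ^ t * X ^ (D - t) := by
      rw [← pow_add]; congr 1; omega
    rw [hX, ← mul_assoc, map_mul, map_mul, trunc_X_pow]
    simp

noncomputable def sigT (t : ℕ) (σ : R →+* R) : TruncPoly R t →+* TruncPoly R t :=
  RingQuot.lift ⟨(truncMk R t).comp (Polynomial.mapRingHom σ), by
    rintro p q ⟨rfl, rfl⟩
    simp only [RingHom.comp_apply, Polynomial.coe_mapRingHom, Polynomial.map_pow,
      Polynomial.map_X, Polynomial.map_zero, map_zero]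
    exact trunc_X_pow⟩

theorem sigT_mk (σ : R →+* R) (p : R[X]) :
    sigT t σ (truncMk R t p) = truncMk R t (p.map σ) :=
  RingQuot.lift_mkRingHom_apply _ _ _

theorem iter_tmul (σ : R →+* R) (hσ : ∀ r : R, (⇑σ)^[t] r = r) :
    ∀ (k : ℕ) (x : R), (⇑σ)^[t * k] x = x := by
  intro k
  induction k with
  | zero => simp
  | succ k ih =>
    intro x
    rw [Nat.mul_succ, Function.iterate_add_apply, hσ x, ih x]

theorem iter_mod (σ : R →+* R) (hσ : ∀ r : R, (⇑σ)^[t] r = r) (m : ℕ) (a : R) :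
    (⇑σ)^[m % t] a = (⇑σ)^[m] a := by
  conv_rhs => rw [← Nat.div_add_mod m t]
  rw [Function.iterate_add_apply, iter_tmul σ hσ]

section NZ
variable [NeZero t]

theorem iter_fin_succ (σ : R →+* R) (hσ : ∀ r : R, (⇑σ)^[t] r = r)
    (i : Fin t) (a : R) :
    (⇑σ)^[((i + 1 : Fin t) : ℕ)] a = σ ((⇑σ)^[(i : ℕ)] a) := by
  have h : ((i + 1 : Fin t) : ℕ) = ((i : ℕ) + 1) % t := by
    rw [Fin.val_add, Fin.val_one']
    conv_rhs => rw [Nat.add_mod, Nat.mod_eq_of_lt i.isLt]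
  rw [h, iter_mod σ hσ, Function.iterate_succ_apply']

theorem muBlock_mem {n : ℕ} (σ : R →+* R) (A : Matrix (Fin n) (Fin n) (Fin t → R))
    (x y : Fin n × Fin t) :
    muBlock σ A x y ∈ H R t (((y.2 - x.2 : Fin t) : ℕ)) := ⟨_, rfl⟩

theorem muBlock_map_sigT {n : ℕ} (σ : R →+* R)
    (hσ : ∀ r : R, (⇑σ)^[t] r = r) (A : Matrix (Fin n) (Fin n) (Fin t → R)) :
    (muBlock σ A).map (sigT t σ) =
      (muBlock σ A).submatrix
        (Equiv.prodCongr (Equiv.refl (Fin n)) (Equiv.addRight (1 : Fin t)))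
        (Equiv.prodCongr (Equiv.refl (Fin n)) (Equiv.addRight (1 : Fin t))) := by
  ext ⟨p, i⟩ ⟨q, j⟩
  show sigT t σ (muBlock σ A (p, i) (q, j)) = muBlock σ A (p, i + 1) (q, j + 1)
  simp only [muBlock, mu, Matrix.of_apply]
  rw [sigT_mk, Polynomial.map_mul, Polynomial.map_C, Polynomial.map_pow, Polynomial.map_X]
  have hsub : (j + 1) - (i + 1) = j - i := add_sub_add_right_eq_sub j i 1
  rw [hsub]
  rw [iter_fin_succ σ hσ i]

theorem charpoly_fixed {n : ℕ} (σ : R →+* R)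
    (hσ : ∀ r : R, (⇑σ)^[t] r = r) (A : Matrix (Fin n) (Fin n) (Fin t → R)) :
    ((muBlock σ A).charpoly).map (sigT t σ) = (muBlock σ A).charpoly := by
  rw [← Matrix.charpoly_map, muBlock_map_sigT σ hσ A]
  set e := Equiv.prodCongr (Equiv.refl (Fin n)) (Equiv.addRight (1 : Fin t))
  have : (muBlock σ A).submatrix e e = Matrix.reindex e.symm e.symm (muBlock σ A) := by
    rw [Matrix.reindex_apply]; simp
  rw [this, Matrix.charpoly_reindex]

end NZ
end CHAux


/-- Cayley–Hamilton over the fixed ring: if `R` is a commutative `ℚ`-algebra and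
`B = μ_n(A)`, then every coefficient of the characteristic polynomial of `B` is the
image under `π∘C` of an element of the fixed ring `R^σ`, and consequently `B`
satisfies a monic identity of degree `tn` with coefficients fixed by `σ`. -/
theorem cayley_hamilton_fixed_ring (R : Type*) [CommRing R] [Algebra ℚ R]
    (t n : ℕ) (ht : 1 ≤ t) (hn : 1 ≤ n)
    (σ : R →+* R) (hσ : ∀ r : R, (⇑σ)^[t] r = r)
    (A : Matrix (Fin n) (Fin n) (Fin t → R)) :
    (∀ k : ℕ, ∃ c : R, σ c = c ∧
      (Matrix.charpoly (muBlock σ A)).coeff k = truncMk R t (C c)) ∧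
    ∃ c : Fin (t * n) → R, (∀ i, σ (c i) = c i) ∧
      muBlock σ A ^ (t * n) +
        ∑ i : Fin (t * n),
          truncMk R t (C (c i)) • muBlock σ A ^ (t * n - 1 - (i : ℕ)) = 0 := by
  classical
  haveI : NeZero t := ⟨by omega⟩
  set B := muBlock σ A with hB
  have h1 : ∀ k : ℕ, ∃ c : R, σ c = c ∧ B.charpoly.coeff k = truncMk R t (C c) := by
    intro k
    have hmem : B.charpoly.coeff k ∈ CHAux.H R t 0 := by
      rw [Matrix.charpoly, Matrix.det_apply, Polynomial.finset_sum_coeff]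
      refine AddSubgroup.sum_mem _ fun τ _ => ?_
      rw [Units.smul_def, Polynomial.coeff_smul]
      refine AddSubgroup.zsmul_mem _ ?_ _
      have hp := CHAux.homog_prod Finset.univ
        (fun x : Fin n × Fin t => (Matrix.charmatrix B) (τ x) x)
        (fun x : Fin n × Fin t => ((x.2 - (τ x).2 : Fin t) : ℕ)) ?_ k
      · obtain ⟨c, hc⟩ := CHAux.H_dvd ht (CHAux.t_dvd_sum ht τ) hp
        exact ⟨c, by rw [hc, pow_zero, mul_one]⟩
      · intro x _ m
        show ((Matrix.charmatrix B) (τ x) x).coeff m ∈ _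
        by_cases hx : τ x = x
        · rw [hx, Matrix.charmatrix_apply_eq, Polynomial.coeff_sub]
          match m with
          | 0 => simpa using AddSubgroup.neg_mem _ (CHAux.muBlock_mem σ A x x)
          | 1 =>
            have h0 : ((x.2 - x.2 : Fin t) : ℕ) = 0 := by rw [sub_self, Fin.val_zero]
            rw [h0]
            simpa using CHAux.one_mem_H
          | (m + 2) => simpa [Polynomial.coeff_X] using (CHAux.H R t ((x.2 - x.2 : Fin t) : ℕ)).zero_mem
        · rw [Matrix.charmatrix_apply_ne _ _ _ hx]
          match m with
          | 0 => simpa using AddSubgroup.neg_mem _ (CHAux.muBlock_mem σ A (τ x) x)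
          | (m + 1) => simpa using (CHAux.H R t ((x.2 - (τ x).2 : Fin t) : ℕ)).zero_mem
    obtain ⟨c, hc⟩ := hmem
    rw [pow_zero, mul_one] at hc
    have hfix := congrArg (fun p : Polynomial (TruncPoly R t) => p.coeff k)
      (CHAux.charpoly_fixed σ hσ A)
    simp only [Polynomial.coeff_map] at hfix
    refine ⟨c, ?_, hc⟩
    rw [hc, CHAux.sigT_mk, Polynomial.map_C] at hfix
    exact CHAux.truncC_inj ht hfix
  refine ⟨h1, ?_⟩
  choose f hf1 hf2 using h1
  rcases subsingleton_or_nontrivial R with hR | hR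
  · haveI : Subsingleton (TruncPoly R t) :=
      (RingQuot.mkRingHom_surjective _).subsingleton
    exact ⟨fun _ => 0, fun i => map_zero σ, Subsingleton.elim _ _⟩
  · haveI : Nontrivial (TruncPoly R t) :=
      ⟨⟨truncMk R t (C 0), truncMk R t (C 1), fun h => zero_ne_one (CHAux.truncC_inj ht h)⟩⟩
    have hdeg : B.charpoly.natDegree = n * t := by
      rw [Matrix.charpoly_natDegree_eq_dim, Fintype.card_prod, Fintype.card_fin,
        Fintype.card_fin]
    have hdeg' : B.charpoly.natDegree < t * n + 1 := by rw [hdeg, Nat.mul_comm]; omega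
    have hCH := Matrix.aeval_self_charpoly B
    rw [Polynomial.aeval_eq_sum_range' hdeg', Finset.sum_range_succ] at hCH
    have hlead : B.charpoly.coeff (t * n) = 1 := by
      rw [show t * n = B.charpoly.natDegree by rw [hdeg, Nat.mul_comm]]
      exact B.charpoly_monic.coeff_natDegree
    rw [hlead, one_smul] at hCH
    refine ⟨fun i => f (t * n - 1 - (i : ℕ)), fun i => hf1 _, ?_⟩
    have hsum : (∑ i : Fin (t * n),
          truncMk R t (C (f (t * n - 1 - (i : ℕ)))) • B ^ (t * n - 1 - (i : ℕ)))
        = ∑ k ∈ Finset.range (t * n), B.charpoly.coeff k • B ^ k := by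
      rw [Fin.sum_univ_eq_sum_range
        (fun i => truncMk R t (C (f (t * n - 1 - i))) • B ^ (t * n - 1 - i)) (t * n)]
      rw [← Finset.sum_range_reflect (fun k => B.charpoly.coeff k • B ^ k) (t * n)]
      exact Finset.sum_congr rfl fun j _ => by rw [hf2]
    rw [hsum, add_comm]
    exact hCH
end

section
/- Suppose R is commutative and is a ℚ-algebra, and σ^t = id. Then for every tuple r : Fin t → R there exist c₁, …, c_t ∈ R with σ(c_i) = c_i such that μ(r)^t + π(c₁)·μ(r)^{t−1} + ⋯ + π(c_{t−1})·μ(r) + π(c_t)·I = 0 holds in M_t(R[z]/(z^t)). (This expresses that the truncated skew polynomial ring R[w,σ]/(w^t) is integral of degree t over the fixed ring R^σ.) -/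
open Polynomial

lemma trunc_X_pow_zero {R : Type*} [CommRing R] {t s : ℕ} (h : t ≤ s) :
    truncMk R t (X ^ s) = 0 := by
  have h0 : truncMk R t (X ^ t) = 0 := by
    have := RingQuot.mkRingHom_rel
      (r := fun p q : R[X] => p = X ^ t ∧ q = 0) (x := X ^ t) (y := 0) ⟨rfl, rfl⟩
    simpa using this
  calc truncMk R t (X ^ s) = truncMk R t (X ^ t) * truncMk R t (X ^ (s - t)) := by
        rw [← map_mul, ← pow_add]; congr 2; omega
    _ = 0 := by rw [h0, zero_mul]

lemma trunc_algebraMap {R : Type*} [CommRing R] {t : ℕ} (x : R) :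
    truncMk R t (C x) = algebraMap R (TruncPoly R t) x := by
  have h1 := (RingQuot.mkAlgHom R (fun p q : R[X] => p = X ^ t ∧ q = 0)).commutes x
  have h2 := RingQuot.mkAlgHom_coe R (fun p q : R[X] => p = X ^ t ∧ q = 0)
  calc truncMk R t (C x)
      = (RingQuot.mkAlgHom R (fun p q : R[X] => p = X ^ t ∧ q = 0)) (C x) :=
        (RingHom.congr_fun h2 (C x)).symm
    _ = (RingQuot.mkAlgHom R (fun p q : R[X] => p = X ^ t ∧ q = 0))
          (algebraMap R R[X] x) := by rw [Polynomial.algebraMap_eq]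
    _ = algebraMap R (TruncPoly R t) x := h1

lemma perm_offset_sum {t : ℕ} (ht : 1 ≤ t) (τ : Equiv.Perm (Fin t)) (hτ : τ ≠ 1) :
    t ≤ ∑ i : Fin t, ((i - τ i : Fin t) : ℕ) := by
  haveI : NeZero t := ⟨by omega⟩
  have hdvd : t ∣ ∑ i : Fin t, ((i - τ i : Fin t) : ℕ) := by
    have hmod : (∑ i : Fin t, ((i - τ i : Fin t) : ℕ)) % t
        = (∑ i : Fin t, (((i : ℕ)) + (t - ((τ i : ℕ))))) % t := by
      rw [Finset.sum_nat_mod, Finset.sum_nat_mod (f := fun i : Fin t => (i : ℕ) + (t - (τ i : ℕ)))]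
      congr 1
      refine Finset.sum_congr rfl fun i _ => ?_
      rw [Fin.sub_def]
      show ((t - ((τ i : ℕ)) + (i : ℕ)) % t) % t = _
      rw [Nat.mod_mod_of_dvd _ dvd_rfl]
      congr 1
      omega
    have hsum : (∑ i : Fin t, (((i : ℕ)) + (t - ((τ i : ℕ))))) = t * t := by
      rw [Finset.sum_add_distrib]
      have h1 : ∑ i : Fin t, (t - ((τ i : ℕ))) = ∑ i : Fin t, (t - (i : ℕ)) :=
        Equiv.sum_comp τ (fun j : Fin t => t - (j : ℕ))
      rw [h1, ← Finset.sum_add_distrib]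
      have h2 : ∀ i : Fin t, (i : ℕ) + (t - (i : ℕ)) = t := fun i => by
        have := i.isLt; omega
      rw [Finset.sum_congr rfl fun i _ => h2 i]
      simp [Finset.card_univ, mul_comm]
    rw [hsum, Nat.mul_mod_left] at hmod
    omega
  have hpos : 0 < ∑ i : Fin t, ((i - τ i : Fin t) : ℕ) := by
    obtain ⟨i, hi⟩ : ∃ i, τ i ≠ i := by
      by_contra h
      push_neg at h
      exact hτ (Equiv.ext fun x => h x)
    have hne : (i - τ i : Fin t) ≠ 0 := fun h => hi ((sub_eq_zero.mp h).symm)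
    have hlt : 0 < ((i - τ i : Fin t) : ℕ) := by
      rcases Nat.eq_zero_or_pos ((i - τ i : Fin t) : ℕ) with h | h
      · exact absurd (Fin.ext h) hne
      · exact h
    calc 0 < ((i - τ i : Fin t) : ℕ) := hlt
      _ ≤ _ := Finset.single_le_sum (f := fun j : Fin t => ((j - τ j : Fin t) : ℕ))
          (fun j _ => Nat.zero_le _) (Finset.mem_univ i)
  exact Nat.le_of_dvd hpos hdvd

/-- If `R` is a commutative `ℚ`-algebra and `σ^t = 1`, then every element `μ(r)` of
the image of the truncated skew polynomial ring satisfies a monic polynomial identity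
of degree `t` with coefficients in the fixed ring `R^σ`: the truncated skew polynomial
ring `R[w,σ]/(w^t)` is integral of degree `t` over `R^σ`. -/
theorem mu_integral_over_fixed_ring (R : Type*) [CommRing R] [Algebra ℚ R]
    (t : ℕ) (ht : 1 ≤ t)
    (σ : R →+* R) (hσ : ∀ r : R, (⇑σ)^[t] r = r) (r : Fin t → R) :
    ∃ c : Fin t → R, (∀ i, σ (c i) = c i) ∧
      mu σ r ^ t +
        ∑ i : Fin t, truncMk R t (C (c i)) • mu σ r ^ (t - 1 - (i : ℕ)) = 0 := by
  rcases subsingleton_or_nontrivial R with hR | hR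
  · haveI : Subsingleton (TruncPoly R t) :=
      (RingQuot.mkRingHom_surjective _).subsingleton
    exact ⟨fun _ => 0, fun i => map_zero σ, Subsingleton.elim _ _⟩
  haveI : NeZero t := ⟨by omega⟩
  set T := TruncPoly R t with hT
  set a : Fin t → R := fun i => (⇑σ)^[(i : ℕ)] (r 0) with ha_def
  have htk : ∀ (k : ℕ) (y : R), (⇑σ)^[t * k] y = y := by
    intro k y
    rw [Function.iterate_mul]
    exact Function.iterate_fixed (hσ y) k
  have hiter : ∀ (m : ℕ) (y : R), (⇑σ)^[m] y = (⇑σ)^[m % t] y := by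
    intro m y
    conv_lhs => rw [← Nat.div_add_mod m t]
    rw [Function.iterate_add_apply, htk]
  have ha : ∀ i : Fin t, σ (a i) = a (i + 1) := by
    intro i
    have hval : ((i + 1 : Fin t) : ℕ) = ((i : ℕ) + 1) % t := by
      rw [Fin.add_def]
      simp only [Fin.val_one']
      show ((i : ℕ) + 1 % t) % t = _
      conv_rhs => rw [Nat.add_mod]
      rw [Nat.mod_eq_of_lt i.isLt]
    simp only [ha_def, hval, ← hiter, ← Function.iterate_succ_apply' σ (i : ℕ)]
  set q : R[X] := ∏ i : Fin t, (X - C (a i)) with hq_def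
  have hqmonic : q.Monic := monic_prod_of_monic _ _ fun i _ => monic_X_sub_C _
  have hqdeg : q.natDegree = t := by
    rw [hq_def, natDegree_prod_of_monic _ _ fun i _ => monic_X_sub_C _]
    simp only [natDegree_X_sub_C, Finset.sum_const, smul_eq_mul, mul_one, Finset.card_univ,
      Fintype.card_fin]
  have hfix : ∀ k, σ (q.coeff k) = q.coeff k := by
    intro k
    have hmap : q.map σ = q := by
      rw [hq_def, Polynomial.map_prod]
      simp only [Polynomial.map_sub, map_X, map_C]
      refine Fintype.prod_equiv (Equiv.addRight (1 : Fin t)) _ _ fun i => ?_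
      rw [ha i]
      rfl
    conv_rhs => rw [← hmap]
    rw [coeff_map]
  have hdiag : ∀ i : Fin t, mu σ r i i = algebraMap R T (a i) := by
    intro i
    show truncMk R t (C ((⇑σ)^[(i : ℕ)] (r (i - i))) * X ^ ((i - i : Fin t) : ℕ))
      = algebraMap R T (a i)
    rw [sub_self]
    simp only [Fin.val_zero, pow_zero, mul_one]
    exact trunc_algebraMap _
  have hchar : (mu σ r).charpoly = q.map (algebraMap R T) := by
    rw [Matrix.charpoly, Matrix.det_apply]
    rw [Finset.sum_eq_single (1 : Equiv.Perm (Fin t))]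
    · simp only [Equiv.Perm.sign_one, one_smul, Equiv.Perm.one_apply]
      rw [hq_def, Polynomial.map_prod]
      refine Finset.prod_congr rfl fun i _ => ?_
      rw [Matrix.charmatrix_apply_eq, hdiag i]
      simp
    · intro τ _ hτ
      suffices h : ∏ i : Fin t, (mu σ r).charmatrix (τ i) i = 0 by rw [h]; exact smul_zero _
      have hfac : ∀ i : Fin t, ∃ g : T[X],
          (mu σ r).charmatrix (τ i) i = C (truncMk R t (X ^ ((i - τ i : Fin t) : ℕ))) * g := by
        intro i
        by_cases h : τ i = i
        · refine ⟨X - C (mu σ r i i), ?_⟩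
          rw [h, Matrix.charmatrix_apply_eq, sub_self]
          simp
        · refine ⟨-C (truncMk R t (C ((⇑σ)^[((τ i : Fin t) : ℕ)] (r (i - τ i))))), ?_⟩
          rw [Matrix.charmatrix_apply_ne _ _ _ h]
          have hmu : mu σ r (τ i) i
              = truncMk R t (C ((⇑σ)^[((τ i : Fin t) : ℕ)] (r (i - τ i)))
                  * X ^ ((i - τ i : Fin t) : ℕ)) := rfl
          rw [hmu, map_mul, C_mul]
          ring
      choose g hg using hfac
      calc ∏ i : Fin t, (mu σ r).charmatrix (τ i) i
          = ∏ i : Fin t, (C (truncMk R t (X ^ ((i - τ i : Fin t) : ℕ))) * g i) :=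
            Finset.prod_congr rfl fun i _ => hg i
        _ = (∏ i : Fin t, C (truncMk R t (X ^ ((i - τ i : Fin t) : ℕ)))) * ∏ i : Fin t, g i :=
            Finset.prod_mul_distrib
        _ = C (truncMk R t (X ^ (∑ i : Fin t, ((i - τ i : Fin t) : ℕ)))) * ∏ i : Fin t, g i := by
            rw [← map_prod, ← map_prod, Finset.prod_pow_eq_pow_sum]
        _ = 0 := by
            rw [trunc_X_pow_zero (perm_offset_sum ht τ hτ), map_zero, zero_mul]
    · intro h
      exact absurd (Finset.mem_univ _) h
  have hCH := Matrix.aeval_self_charpoly (mu σ r)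
  rw [hchar, Polynomial.aeval_map_algebraMap] at hCH
  rw [Polynomial.aeval_eq_sum_range, hqdeg, Finset.sum_range_succ] at hCH
  have hcoefft : q.coeff t = 1 := hqdeg ▸ hqmonic.coeff_natDegree
  rw [hcoefft, one_smul] at hCH
  refine ⟨fun j => q.coeff (t - 1 - (j : ℕ)), fun j => hfix _, ?_⟩
  have hrev : ∀ i : Fin t, ((Fin.rev i : Fin t) : ℕ) = t - 1 - (i : ℕ) := by
    intro i
    rw [Fin.val_rev]
    omega
  have hgoal : ∑ i : Fin t, truncMk R t (C (q.coeff (t - 1 - (i : ℕ)))) • mu σ r ^ (t - 1 - (i : ℕ))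
      = ∑ i ∈ Finset.range t, q.coeff i • mu σ r ^ i := by
    calc ∑ i : Fin t, truncMk R t (C (q.coeff (t - 1 - (i : ℕ)))) • mu σ r ^ (t - 1 - (i : ℕ))
        = ∑ i : Fin t, q.coeff (t - 1 - (i : ℕ)) • mu σ r ^ (t - 1 - (i : ℕ)) :=
          Finset.sum_congr rfl fun i _ => by rw [trunc_algebraMap, algebraMap_smul]
      _ = ∑ i : Fin t, q.coeff ((Fin.revPerm i : Fin t) : ℕ) • mu σ r ^ ((Fin.revPerm i : Fin t) : ℕ) :=
          Finset.sum_congr rfl fun i _ => by rw [Fin.revPerm_apply, hrev i]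
      _ = ∑ i : Fin t, q.coeff ((i : Fin t) : ℕ) • mu σ r ^ ((i : Fin t) : ℕ) :=
          Equiv.sum_comp Fin.revPerm (fun j : Fin t => q.coeff (j : ℕ) • mu σ r ^ (j : ℕ))
      _ = ∑ i ∈ Finset.range t, q.coeff i • mu σ r ^ i :=
          Fin.sum_univ_eq_sum_range (fun n => q.coeff n • mu σ r ^ n) t
  rw [hgoal, add_comm]
  exact hCH
end
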